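/- arXiv:2105.04750 — 2 statements merged into one kernel-verified Lean document; each statement's English description precedes it below -/
import Mathlib

section
/- Consider the discrete-time networked SIR model under Assumptions 1 and 2. For any node i ∈ V and any time step k ∈ ℤ≥0: if x_i[k] > 0, then r_i[k+1] > 0; and if x_i[k] = 0, then r_i[k+1] = 0. -/
/-!
The conditions `s_i, x_i ≥ 0` and `s_i + x_i ≤ 1` are forward invariant, because the infection
pressure `h β ∑ⱼ a_ij x_j` then stays in `[0, 1]`. Hence `r_i` is nondecreasing from `0`, which gives
the first claim. For the second, `1 - hδ > 0` makes both terms of `x_i[k+1]` nonnegative, so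
`x_i[k+1] = 0` forces `x_i[k] = 0`; thus `x_i` vanishes up to time `k` and `r_i` never leaves `0`.
-/

open Finset

section SIR

variable {ι : Type*} {a : ι → ι → ℝ} {h β δ : ℝ} {s x r : ι → ℕ → ℝ}

theorem sum_mul_le_sum_of_le_one [Fintype ι] {w y : ι → ℝ} (hw : ∀ j, 0 ≤ w j) (hy : ∀ j, y j ≤ 1) :
    ∑ j, w j * y j ≤ ∑ j, w j :=
  sum_le_sum fun j _ => mul_le_of_le_one_right (hw j) (hy j)

theorem sir_state_bounds [Fintype ι]
    (hdynS : ∀ i k, s i (k + 1) = s i k - h * s i k * β * ∑ j, a i j * x j k)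
    (hdynX : ∀ i k, x i (k + 1) = (1 - h * δ) * x i k + h * s i k * β * ∑ j, a i j * x j k)
    (hs0 : ∀ i, 0 ≤ s i 0) (hx0 : ∀ i, 0 ≤ x i 0) (hsum0 : ∀ i, s i 0 + x i 0 ≤ 1)
    (hhβ : 0 ≤ h * β) (hhδ₀ : 0 ≤ h * δ) (hhδ₁ : h * δ ≤ 1)
    (ha : ∀ i j, 0 ≤ a i j) (hRow : ∀ i, h * β * ∑ j, a i j ≤ 1) :
    ∀ k i, 0 ≤ s i k ∧ 0 ≤ x i k ∧ s i k + x i k ≤ 1 := by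
  intro k
  induction k with
  | zero => exact fun i => ⟨hs0 i, hx0 i, hsum0 i⟩
  | succ k ih =>
    intro i
    obtain ⟨hs, hx, hsx⟩ := ih i
    set p := h * β * ∑ j, a i j * x j k with hp
    have hp₀ : 0 ≤ p :=
      mul_nonneg hhβ (sum_nonneg fun j _ => mul_nonneg (ha i j) (ih j).2.1)
    have hp₁ : p ≤ 1 := calc
      p ≤ h * β * ∑ j, a i j :=
        mul_le_mul_of_nonneg_left
          (sum_mul_le_sum_of_le_one (ha i) fun j => by linarith [(ih j).1, (ih j).2.2]) hhβ
      _ ≤ 1 := hRow i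
    have hS : s i (k + 1) = s i k * (1 - p) := by rw [hdynS, hp]; ring
    have hX : x i (k + 1) = (1 - h * δ) * x i k + s i k * p := by rw [hdynX, hp]; ring
    refine ⟨?_, ?_, ?_⟩
    · rw [hS]; exact mul_nonneg hs (by linarith)
    · rw [hX]; exact add_nonneg (mul_nonneg (by linarith) hx) (mul_nonneg hs hp₀)
    · rw [hS, hX]; nlinarith [mul_nonneg hhδ₀ hx]

theorem sir_recovered_nonneg {i : ι}
    (hdynR : ∀ k, r i (k + 1) = r i k + h * δ * x i k)
    (hr0 : 0 ≤ r i 0) (hhδ : 0 ≤ h * δ) (hx : ∀ k, 0 ≤ x i k) :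
    ∀ k, 0 ≤ r i k := by
  intro k
  induction k with
  | zero => exact hr0
  | succ k ih => rw [hdynR]; exact add_nonneg ih (mul_nonneg hhδ (hx k))

theorem sir_infected_eq_zero_of_succ [Fintype ι] {i : ι} {k : ℕ}
    (hdynX : x i (k + 1) = (1 - h * δ) * x i k + h * s i k * β * ∑ j, a i j * x j k)
    (hs : 0 ≤ s i k) (hx : ∀ j, 0 ≤ x j k) (hhβ : 0 ≤ h * β) (hhδ : h * δ < 1)
    (ha : ∀ j, 0 ≤ a i j) (hsucc : x i (k + 1) = 0) :
    x i k = 0 := by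
  have hpressure : 0 ≤ h * s i k * β * ∑ j, a i j * x j k := by
    have hsum : 0 ≤ ∑ j, a i j * x j k := sum_nonneg fun j _ => mul_nonneg (ha j) (hx j)
    calc (0 : ℝ) ≤ h * β * s i k * ∑ j, a i j * x j k := by positivity
      _ = h * s i k * β * ∑ j, a i j * x j k := by ring
  have hdecay : (1 - h * δ) * x i k = 0 :=
    le_antisymm (by linarith) (mul_nonneg (by linarith) (hx i))
  exact (mul_eq_zero.mp hdecay).resolve_left (by linarith)

theorem sir_recovered_eq_zero_of_infected_eq_zero {i : ι}
    (hdynR : ∀ k, r i (k + 1) = r i k + h * δ * x i k) (hr0 : r i 0 = 0)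
    (hback : ∀ k, x i (k + 1) = 0 → x i k = 0) :
    ∀ k, x i k = 0 → r i (k + 1) = 0 := by
  intro k
  induction k with
  | zero => intro hx; rw [hdynR, hr0, hx, mul_zero, add_zero]
  | succ k ih => intro hx; rw [hdynR, ih (hback k hx), hx, mul_zero, add_zero]

end SIR

theorem sir_recovered_next_step_iff_infected_general
    {n : ℕ} (a : Fin n → Fin n → ℝ)
    (h β δ : ℝ) (s x r : Fin n → ℕ → ℝ)
    -- SIR dynamics
    (hdynS : ∀ i k, s i (k + 1) = s i k - h * s i k * β * ∑ j, a i j * x j k)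
    (hdynX : ∀ i k, x i (k + 1) = (1 - h * δ) * x i k + h * s i k * β * ∑ j, a i j * x j k)
    (hdynR : ∀ i k, r i (k + 1) = r i k + h * δ * x i k)
    -- Assumption 1 (initial conditions)
    (hs0 : ∀ i, 0 < s i 0 ∧ s i 0 ≤ 1)
    (hx0 : ∀ i, 0 ≤ x i 0 ∧ x i 0 < 1)
    (hr0 : ∀ i, r i 0 = 0)
    (hsum0 : ∀ i, s i 0 + x i 0 = 1)
    -- Assumption 2 (model parameters)
    (hh : 0 < h) (hβ : 0 < β) (hδ : 0 < δ) (hhδ : h * δ < 1)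
    (haNonneg : ∀ i j, 0 ≤ a i j)
    (hRow : ∀ i, h * β * ∑ j, a i j < 1) :
    ∀ (i : Fin n) (k : ℕ),
      (0 < x i k → 0 < r i (k + 1)) ∧ (x i k = 0 → r i (k + 1) = 0) := by
  have hhβ : 0 ≤ h * β := by positivity
  have hhδ₀ : 0 < h * δ := by positivity
  have hbounds := sir_state_bounds hdynS hdynX (fun i => (hs0 i).1.le) (fun i => (hx0 i).1)
    (fun i => (hsum0 i).le) hhβ hhδ₀.le hhδ.le haNonneg (fun i => (hRow i).le)
  intro i k
  have hr : ∀ k, 0 ≤ r i k :=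
    sir_recovered_nonneg (hdynR i) (hr0 i).ge hhδ₀.le fun k => (hbounds k i).2.1
  refine ⟨fun hx => ?_, ?_⟩
  · rw [hdynR]
    exact add_pos_of_nonneg_of_pos (hr k) (mul_pos hhδ₀ hx)
  · exact sir_recovered_eq_zero_of_infected_eq_zero (hdynR i) (hr0 i)
      (fun k => sir_infected_eq_zero_of_succ (hdynX i k) (hbounds k i).1
        (fun j => (hbounds k j).2.1) hhβ hhδ (haNonneg i)) k

/-- Fact 3: Under Assumptions 1 and 2, for any node `i` and time `k`:
if `x_i[k] > 0` then `r_i[k+1] > 0`, and if `x_i[k] = 0` then `r_i[k+1] = 0`. -/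
theorem sir_recovered_next_step_iff_infected
    {n : ℕ} (E : Fin n → Fin n → Prop) (a : Fin n → Fin n → ℝ)
    (h β δ : ℝ) (s x r : Fin n → ℕ → ℝ)
    -- SIR dynamics
    (hdynS : ∀ i k, s i (k + 1) = s i k - h * s i k * β * ∑ j, a i j * x j k)
    (hdynX : ∀ i k, x i (k + 1) = (1 - h * δ) * x i k + h * s i k * β * ∑ j, a i j * x j k)
    (hdynR : ∀ i k, r i (k + 1) = r i k + h * δ * x i k)
    -- Assumption 1 (initial conditions)
    (hs0 : ∀ i, 0 < s i 0 ∧ s i 0 ≤ 1)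
    (hx0 : ∀ i, 0 ≤ x i 0 ∧ x i 0 < 1)
    (hr0 : ∀ i, r i 0 = 0)
    (hsum0 : ∀ i, s i 0 + x i 0 = 1)
    -- Assumption 2 (model parameters)
    (hh : 0 < h) (hβ : 0 < β) (hδ : 0 < δ) (hhδ : h * δ < 1)
    (haE : ∀ i j, E j i → 0 < a i j)
    (haNonneg : ∀ i j, 0 ≤ a i j)
    (haZero : ∀ i j, ¬ E j i → j ≠ i → a i j = 0)
    (hRow : ∀ i, h * β * ∑ j, a i j < 1) :
    ∀ (i : Fin n) (k : ℕ),
      (0 < x i k → 0 < r i (k + 1)) ∧ (x i k = 0 → r i (k + 1) = 0) :=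
  sir_recovered_next_step_iff_infected_general a h β δ s x r hdynS hdynX hdynR hs0 hx0 hr0 hsum0 hh
    hβ hδ hhδ haNonneg hRow
end

section
/- Let M̄ be a finite set, F_p a 2×2 real symmetric positive definite matrix, and for each y ∈ M̄ let H_y be a 2×2 real symmetric positive semidefinite matrix; write H(Y) = ∑_{y∈Y} H_y. Let Y ⊆ M̄ and A ⊆ M̄ with A \ Y ≠ ∅, and let z' ∈ argmax_{y ∈ A\Y} λ₁(F_p + H({y} ∪ Y)). Then ∑_{y ∈ A\Y} [ Tr((F_p + H(Y))⁻¹) − Tr((F_p + H({y} ∪ Y))⁻¹) ] ≥ ( ∑_{y ∈ A\Y} Tr(H_y) ) / ( λ₁(F_p + H(Y)) · λ₁(F_p + H({z'} ∪ Y)) ). -/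
/-!
A positive definite `2 × 2` matrix `P` with eigenvalues `a ≥ b > 0` has `Tr P⁻¹ = 1/a + 1/b`.
If `H ⪰ 0` and `P + H` has eigenvalues `A ≥ B`, then `B ≥ b` and `Tr H = (A - a) + (B - b)`, so
`Tr P⁻¹ - Tr (P + H)⁻¹ = (A - a)/(aA) + (B - b)/(bB) ≥ Tr H/(aA)`, since `bB ≤ aA`.
Apply this with `P = F_p + H(Y)`, `H = H_y`, bound `λ₁(F_p + H({y} ∪ Y))` by its value at `z'`
and sum over `y ∈ A \ Y`.
-/

open Matrix

/-- The largest eigenvalue `λ₁(P)` of a real symmetric `2 × 2` matrix `P`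
(for a symmetric matrix `Tr(P)² − 4 det(P) ≥ 0` and the eigenvalues are
`(Tr(P) ± √(Tr(P)² − 4 det P))/2`). -/
noncomputable def eig1 (P : Matrix (Fin 2) (Fin 2) ℝ) : ℝ :=
  (P.trace + Real.sqrt (P.trace ^ 2 - 4 * P.det)) / 2

noncomputable def eig2 (P : Matrix (Fin 2) (Fin 2) ℝ) : ℝ :=
  (P.trace - Real.sqrt (P.trace ^ 2 - 4 * P.det)) / 2

theorem Matrix.trace_inv_fin_two {K : Type*} [Field K] (P : Matrix (Fin 2) (Fin 2) K) :
    P⁻¹.trace = P.trace / P.det := by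
  rw [inv_def, Ring.inverse_eq_inv', trace_smul, adjugate_fin_two, trace_fin_two, trace_fin_two]
  simp only [of_apply, cons_val', cons_val_zero, cons_val_one, cons_val_fin_one, smul_eq_mul]
  ring

section EigenvaluesFinTwo

variable {P Q H : Matrix (Fin 2) (Fin 2) ℝ}

theorem Matrix.IsHermitian.apply_one_zero (hP : P.IsHermitian) : P 1 0 = P 0 1 := by
  simpa using hP.apply 0 1

theorem Matrix.IsHermitian.trace_sq_sub_four_mul_det_nonneg (hP : P.IsHermitian) :
    0 ≤ P.trace ^ 2 - 4 * P.det := by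
  rw [trace_fin_two, det_fin_two, hP.apply_one_zero]
  nlinarith [sq_nonneg (P 0 0 - P 1 1), sq_nonneg (P 0 1)]

theorem eig1_add_eig2 (P : Matrix (Fin 2) (Fin 2) ℝ) : eig1 P + eig2 P = P.trace := by
  unfold eig1 eig2
  ring

theorem eig1_mul_eig2 (hP : P.IsHermitian) : eig1 P * eig2 P = P.det := by
  unfold eig1 eig2
  linear_combination (-1 / 4 : ℝ) * Real.sq_sqrt hP.trace_sq_sub_four_mul_det_nonneg

theorem eig2_le_eig1 (P : Matrix (Fin 2) (Fin 2) ℝ) : eig2 P ≤ eig1 P := by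
  unfold eig1 eig2
  linarith [Real.sqrt_nonneg (P.trace ^ 2 - 4 * P.det)]

theorem eig2_pos (hP : P.PosDef) : 0 < eig2 P := by
  have hprod := eig1_mul_eig2 hP.1
  have hsum := eig1_add_eig2 P
  nlinarith [hP.det_pos, hP.trace_pos, eig2_le_eig1 P]

theorem eig1_pos (hP : P.PosDef) : 0 < eig1 P :=
  (eig2_pos hP).trans_le (eig2_le_eig1 P)

theorem trace_inv_eq_inv_eig1_add_inv_eig2 (hP : P.PosDef) :
    P⁻¹.trace = (eig1 P)⁻¹ + (eig2 P)⁻¹ := by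
  rw [trace_inv_fin_two, ← eig1_add_eig2, ← eig1_mul_eig2 hP.1,
    inv_add_inv (eig1_pos hP).ne' (eig2_pos hP).ne']

theorem Matrix.IsHermitian.posSemidef_iff_fin_two (hP : P.IsHermitian) :
    P.PosSemidef ↔ 0 ≤ P.trace ∧ 0 ≤ P.det := by
  refine ⟨fun h => ⟨h.trace_nonneg, h.det_nonneg⟩, fun ⟨htr, hdet⟩ => ?_⟩
  have h10 := hP.apply_one_zero
  rw [trace_fin_two] at htr
  rw [det_fin_two, h10] at hdet
  refine PosSemidef.of_dotProduct_mulVec_nonneg hP fun x => ?_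
  have hquad : star x ⬝ᵥ (P *ᵥ x) =
      P 0 0 * (x 0 * x 0) + 2 * P 0 1 * (x 0 * x 1) + P 1 1 * (x 1 * x 1) := by
    simp only [dotProduct, mulVec, Fin.sum_univ_two, h10, star_trivial]
    ring
  rw [hquad]
  rcases lt_trichotomy (P 0 0) 0 with hneg | hzero | hpos
  · nlinarith [sq_nonneg (P 0 1)]
  · have h01 : P 0 1 = 0 := by nlinarith [sq_nonneg (P 0 1)]
    rw [hzero, h01]
    nlinarith [mul_self_nonneg (x 1)]
  · -- `P₀₀ · q(x) = (P₀₀ x₀ + P₀₁ x₁)² + det P · x₁²`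
    nlinarith [sq_nonneg (P 0 0 * x 0 + P 0 1 * x 1), mul_nonneg hdet (mul_self_nonneg (x 1))]

theorem Matrix.IsHermitian.posSemidef_sub_smul_one_iff_le_eig2 (hQ : Q.IsHermitian) (μ : ℝ) :
    (Q - μ • (1 : Matrix (Fin 2) (Fin 2) ℝ)).PosSemidef ↔ μ ≤ eig2 Q := by
  have hshift : (Q - μ • (1 : Matrix (Fin 2) (Fin 2) ℝ)).IsHermitian :=
    hQ.sub (isHermitian_one.smul (IsSelfAdjoint.all μ))
  have htr : (Q - μ • (1 : Matrix (Fin 2) (Fin 2) ℝ)).trace = Q.trace - 2 * μ := by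
    simp only [trace_fin_two, sub_apply, smul_apply, one_apply_eq, smul_eq_mul]
    ring
  have hdet : (Q - μ • (1 : Matrix (Fin 2) (Fin 2) ℝ)).det = (μ - eig1 Q) * (μ - eig2 Q) := by
    rw [det_fin_two, ← sub_eq_zero]
    have hsum := eig1_add_eig2 Q
    have hprod := eig1_mul_eig2 hQ
    rw [trace_fin_two] at hsum
    rw [det_fin_two] at hprod
    simp only [sub_apply, smul_apply, one_apply_eq, one_apply_ne, smul_eq_mul, ne_eq,
      zero_ne_one, one_ne_zero, not_false_eq_true, mul_zero, mul_one, sub_zero]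
    linear_combination μ * hsum - hprod
  rw [hshift.posSemidef_iff_fin_two, htr, hdet, ← eig1_add_eig2]
  have hle := eig2_le_eig1 Q
  constructor
  · rintro ⟨htr, hdet⟩
    by_contra! hlt
    nlinarith
  · intro hμ
    exact ⟨by linarith, mul_nonneg_of_nonpos_of_nonpos (by linarith) (by linarith)⟩

theorem eig2_le_eig2_add (hP : P.IsHermitian) (hH : H.PosSemidef) : eig2 P ≤ eig2 (P + H) := by
  have hshift : (P - eig2 P • (1 : Matrix (Fin 2) (Fin 2) ℝ)).PosSemidef :=
    (hP.posSemidef_sub_smul_one_iff_le_eig2 _).2 le_rfl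
  refine ((hP.add hH.1).posSemidef_sub_smul_one_iff_le_eig2 _).1 ?_
  rw [add_sub_right_comm]
  exact hshift.add hH

theorem trace_div_eig1_mul_eig1_le_trace_inv_sub (hP : P.PosDef) (hH : H.PosSemidef) :
    H.trace / (eig1 P * eig1 (P + H)) ≤ P⁻¹.trace - (P + H)⁻¹.trace := by
  have hPH : (P + H).PosDef := hP.add_posSemidef hH
  have htr : H.trace = (eig1 (P + H) - eig1 P) + (eig2 (P + H) - eig2 P) := by
    linear_combination eig1_add_eig2 P - eig1_add_eig2 (P + H) - trace_add P H
  rw [trace_inv_eq_inv_eig1_add_inv_eig2 hP, trace_inv_eq_inv_eig1_add_inv_eig2 hPH, htr]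
  have ha := eig1_pos hP
  have hb := eig2_pos hP
  have hA := eig1_pos hPH
  have hB := eig2_pos hPH
  set a := eig1 P
  set b := eig2 P
  set A := eig1 (P + H)
  set B := eig2 (P + H)
  have hbB : b ≤ B := eig2_le_eig2_add hP.1 hH
  have hprod : b * B ≤ a * A := mul_le_mul (eig2_le_eig1 P) (eig2_le_eig1 (P + H)) hB.le ha.le
  calc ((A - a) + (B - b)) / (a * A)
      = (A - a) / (a * A) + (B - b) / (a * A) := add_div _ _ _
    _ ≤ (A - a) / (a * A) + (B - b) / (b * B) :=
        add_le_add_right (div_le_div_of_nonneg_left (sub_nonneg.2 hbB) (mul_pos hb hB) hprod) _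
    _ = a⁻¹ + b⁻¹ - (A⁻¹ + B⁻¹) := by
        field_simp
        ring

end EigenvaluesFinTwo

theorem fPa_marginal_sum_lower_bound_general
    {ι : Type*} [DecidableEq ι]
    (Fp : Matrix (Fin 2) (Fin 2) ℝ) (H : ι → Matrix (Fin 2) (Fin 2) ℝ)
    (hFp : Fp.PosDef) (hH : ∀ y, (H y).PosSemidef)
    (Y A : Finset ι)
    (z' : ι)
    (hz'max : ∀ y ∈ A \ Y,
      eig1 (Fp + ∑ w ∈ insert y Y, H w) ≤ eig1 (Fp + ∑ w ∈ insert z' Y, H w)) :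
    (∑ y ∈ A \ Y, (H y).trace) /
        (eig1 (Fp + ∑ w ∈ Y, H w) * eig1 (Fp + ∑ w ∈ insert z' Y, H w)) ≤
      ∑ y ∈ A \ Y,
        ((Fp + ∑ w ∈ Y, H w)⁻¹.trace - (Fp + ∑ w ∈ insert y Y, H w)⁻¹.trace) := by
  set S := Fp + ∑ w ∈ Y, H w
  have hS : S.PosDef := hFp.add_posSemidef (posSemidef_sum Y fun w _ => hH w)
  rw [Finset.sum_div]
  refine Finset.sum_le_sum fun y hy => ?_
  have hinsert : Fp + ∑ w ∈ insert y Y, H w = S + H y := by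
    rw [Finset.sum_insert (Finset.mem_sdiff.1 hy).2, add_left_comm, add_comm]
  have hmax := hz'max y hy
  rw [hinsert] at hmax ⊢
  calc (H y).trace / (eig1 S * eig1 (Fp + ∑ w ∈ insert z' Y, H w))
      ≤ (H y).trace / (eig1 S * eig1 (S + H y)) :=
        div_le_div_of_nonneg_left (hH y).trace_nonneg
          (mul_pos (eig1_pos hS) (eig1_pos (hS.add_posSemidef (hH y))))
          (mul_le_mul_of_nonneg_left hmax (eig1_pos hS).le)
    _ ≤ S⁻¹.trace - (S + H y)⁻¹.trace := trace_div_eig1_mul_eig1_le_trace_inv_sub hS (hH y)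

/-- Eqs. (40)–(41) in the proof of Lemma 4: lower bound on
`∑_{y∈A\Y} [Tr((F_p+H(Y))⁻¹) − Tr((F_p+H({y}∪Y))⁻¹)]`, where
`z' ∈ argmax_{y∈A\Y} λ₁(F_p + H({y}∪Y))`. -/
theorem fPa_marginal_sum_lower_bound
    {ι : Type*} [Fintype ι] [DecidableEq ι]
    (Fp : Matrix (Fin 2) (Fin 2) ℝ) (H : ι → Matrix (Fin 2) (Fin 2) ℝ)
    (hFp : Fp.PosDef) (hH : ∀ y, (H y).PosSemidef)
    (Y A : Finset ι) (hAY : (A \ Y).Nonempty)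
    (z' : ι) (hz' : z' ∈ A \ Y)
    (hz'max : ∀ y ∈ A \ Y,
      eig1 (Fp + ∑ w ∈ insert y Y, H w) ≤ eig1 (Fp + ∑ w ∈ insert z' Y, H w)) :
    (∑ y ∈ A \ Y, (H y).trace) /
        (eig1 (Fp + ∑ w ∈ Y, H w) * eig1 (Fp + ∑ w ∈ insert z' Y, H w)) ≤
      ∑ y ∈ A \ Y,
        ((Fp + ∑ w ∈ Y, H w)⁻¹.trace - (Fp + ∑ w ∈ insert y Y, H w)⁻¹.trace) :=
  fPa_marginal_sum_lower_bound_general Fp H hFp hH Y A z' hz'max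
end
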